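/- The Black–Scholes call price function u(τ, x) = xΦ(d₁) − Ke^{−rτ}Φ(d₂), with d₁ = (log(x/K) + (r + σ²/2)τ)/(σ√τ) and d₂ = d₁ − σ√τ, satisfies the PDE u_τ = ½σ²x² u_{xx} + rx u_x − ru for all τ > 0 and x > 0, and satisfies u(τ, x) → max(x − K, 0) as τ → 0⁺. -/

import Mathlib

open Real Filter Set

/-- Standard normal cumulative distribution function. -/
noncomputable def Phi (x : ℝ) : ℝ :=
  ∫ t in Set.Iic x, (Real.sqrt (2 * Real.pi))⁻¹ * Real.exp (-t^2 / 2)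

noncomputable def d1 (K σ r τ x : ℝ) : ℝ :=
  (Real.log (x / K) + (r + σ^2 / 2) * τ) / (σ * Real.sqrt τ)

noncomputable def d2 (K σ r τ x : ℝ) : ℝ :=
  d1 K σ r τ x - σ * Real.sqrt τ

/-- The Black–Scholes call price as a function of time-to-maturity and spot. -/
noncomputable def bsCall (K σ r τ x : ℝ) : ℝ :=
  x * Phi (d1 K σ r τ x) - K * Real.exp (-r * τ) * Phi (d2 K σ r τ x)

/-!
The identity `x φ(d₁) = K e^{-rτ} φ(d₂)` makes the terms produced by differentiating `d₁` and
`d₂` cancel, leaving `u_x = Φ(d₁)`, `u_xx = φ(d₁) / (x σ √τ)` and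
`u_τ = x σ φ(d₁) / (2 √τ) + r K e^{-rτ} Φ(d₂)`; the PDE is then algebra.
As `τ → 0⁺`, `d₁` and `d₂` tend to `+∞`, `-∞` or `0` according as `x > K`, `x < K` or `x = K`,
so `u` tends to `(x - K) p` with `p = 1`, `0` or `Φ 0`. Since `d₂` at rate `r` is `d₁` at rate
`r - σ²`, only `d₁` has to be studied.
-/

open MeasureTheory ProbabilityTheory Topology

theorem hasDerivAt_integral_Iic {E : Type*} [NormedAddCommGroup E] [NormedSpace ℝ E]
    [CompleteSpace E] {f : ℝ → E} (hf : Continuous f) (hfi : Integrable f) (x : ℝ) :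
    HasDerivAt (fun y => ∫ t in Iic y, f t) (f x) x := by
  have hsplit : (fun y => ∫ t in Iic y, f t)
      = fun y => (∫ t in (0 : ℝ)..y, f t) + ∫ t in Iic 0, f t := by
    funext y
    rw [← intervalIntegral.integral_Iic_sub_Iic hfi.integrableOn hfi.integrableOn]
    abel
  rw [hsplit]
  exact ((hf.integral_hasStrictDerivAt 0 x).hasDerivAt).add_const _

theorem Phi_eq_integral_gaussianPDFReal (x : ℝ) :
    Phi x = ∫ t in Iic x, gaussianPDFReal 0 1 t := by
  simp [Phi, gaussianPDFReal]

theorem Phi_eq_cdf : Phi = cdf (gaussianReal 0 1) := by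
  funext x
  rw [cdf_eq_real, measureReal_def, gaussianReal_apply_eq_integral _ one_ne_zero,
    ENNReal.toReal_ofReal
      (setIntegral_nonneg measurableSet_Iic fun t _ => gaussianPDFReal_nonneg _ _ _),
    Phi_eq_integral_gaussianPDFReal]

theorem tendsto_Phi_atTop : Tendsto Phi atTop (𝓝 1) := Phi_eq_cdf ▸ tendsto_cdf_atTop _

theorem tendsto_Phi_atBot : Tendsto Phi atBot (𝓝 0) := Phi_eq_cdf ▸ tendsto_cdf_atBot _

theorem continuous_gaussianPDFReal (μ : ℝ) (v : NNReal) : Continuous (gaussianPDFReal μ v) := by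
  unfold gaussianPDFReal; fun_prop

theorem hasDerivAt_Phi (x : ℝ) : HasDerivAt Phi (gaussianPDFReal 0 1 x) x := by
  simpa only [← Phi_eq_integral_gaussianPDFReal] using
    hasDerivAt_integral_Iic (continuous_gaussianPDFReal 0 1) (integrable_gaussianPDFReal 0 1) x

theorem continuous_Phi : Continuous Phi :=
  continuous_iff_continuousAt.2 fun x => (hasDerivAt_Phi x).continuousAt

section BlackScholes

local notation "φ" => gaussianPDFReal 0 1

variable {K σ r τ x : ℝ}

theorem mul_gaussianPDFReal_d1 (hK : 0 < K) (hσ : σ ≠ 0) (hτ : 0 < τ) (hx : 0 < x) :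
    x * φ (d1 K σ r τ x) = K * exp (-r * τ) * φ (d2 K σ r τ x) := by
  set s := σ * √τ
  have hs : s ≠ 0 := mul_ne_zero hσ (sqrt_pos.2 hτ).ne'
  have hd1s : d1 K σ r τ x * s = log x - log K + (r + σ ^ 2 / 2) * τ := by
    rw [d1, div_mul_cancel₀ _ hs, log_div hx.ne' hK.ne']
  have hs2 : s ^ 2 = σ ^ 2 * τ := by rw [mul_pow, sq_sqrt hτ.le]
  have key := congrArg exp <| show -(d1 K σ r τ x - s) ^ 2 / 2 + (-r * τ + log K)
      = -d1 K σ r τ x ^ 2 / 2 + log x by linear_combination hd1s - hs2 / 2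
  rw [exp_add, exp_add, exp_add, exp_log hK, exp_log hx] at key
  simp only [gaussianPDFReal, d2, sub_zero, NNReal.coe_one, mul_one]
  linear_combination (√(2 * π))⁻¹ * key.symm

theorem hasDerivAt_d1_spot (hK : K ≠ 0) (hx : x ≠ 0) :
    HasDerivAt (fun y => d1 K σ r τ y) (x⁻¹ / (σ * √τ)) x := by
  have hlog := ((hasDerivAt_id' x).div_const K).log (div_ne_zero hx hK)
  refine ((hlog.add_const ((r + σ ^ 2 / 2) * τ)).div_const (σ * √τ)).congr_deriv ?_
  field_simp

theorem hasDerivAt_bsCall_spot (hK : 0 < K) (hσ : σ ≠ 0) (hτ : 0 < τ) (hx : 0 < x) :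
    HasDerivAt (fun y => bsCall K σ r τ y) (Phi (d1 K σ r τ x)) x := by
  have hd1 := hasDerivAt_d1_spot (σ := σ) (r := r) (τ := τ) hK.ne' hx.ne'
  have hd2 : HasDerivAt (fun y => d2 K σ r τ y) (x⁻¹ / (σ * √τ)) x := hd1.sub_const _
  refine (((hasDerivAt_id' x).mul ((hasDerivAt_Phi _).comp x hd1)).sub
    (((hasDerivAt_Phi _).comp x hd2).const_mul (K * exp (-r * τ)))).congr_deriv ?_
  simp only [Function.comp_apply]
  linear_combination (x⁻¹ / (σ * √τ)) * (mul_gaussianPDFReal_d1 (r := r) hK hσ hτ hx)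

theorem deriv_bsCall_spot (hK : 0 < K) (hσ : σ ≠ 0) (hτ : 0 < τ) (hx : 0 < x) :
    deriv (fun y => bsCall K σ r τ y) x = Phi (d1 K σ r τ x) :=
  (hasDerivAt_bsCall_spot hK hσ hτ hx).deriv

theorem deriv_deriv_bsCall_spot (hK : 0 < K) (hσ : σ ≠ 0) (hτ : 0 < τ) (hx : 0 < x) :
    deriv (deriv fun y => bsCall K σ r τ y) x = φ (d1 K σ r τ x) * (x⁻¹ / (σ * √τ)) := by
  have hdelta : deriv (fun y => bsCall K σ r τ y) =ᶠ[𝓝 x] fun y => Phi (d1 K σ r τ y) := by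
    filter_upwards [Ioi_mem_nhds hx] with y hy using deriv_bsCall_spot hK hσ hτ hy
  rw [hdelta.deriv_eq]
  exact ((hasDerivAt_Phi _).comp x (hasDerivAt_d1_spot hK.ne' hx.ne')).deriv

theorem hasDerivAt_bsCall_time (hK : 0 < K) (hσ : σ ≠ 0) (hτ : 0 < τ) (hx : 0 < x) :
    HasDerivAt (fun t => bsCall K σ r t x)
      (x * φ (d1 K σ r τ x) * σ / (2 * √τ) + r * K * exp (-r * τ) * Phi (d2 K σ r τ x)) τ := by
  have hsqrt : HasDerivAt (fun t => σ * √t) (σ * (1 / (2 * √τ))) τ :=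
    (hasDerivAt_sqrt hτ.ne').const_mul σ
  have hd1 : HasDerivAt (fun t => d1 K σ r t x) (deriv (fun t => d1 K σ r t x) τ) τ := by
    refine DifferentiableAt.hasDerivAt ?_
    unfold d1
    exact ((differentiableAt_id.const_mul _).const_add _).div hsqrt.differentiableAt
      (mul_ne_zero hσ (sqrt_pos.2 hτ).ne')
  have hd2 : HasDerivAt (fun t => d2 K σ r t x) _ τ := hd1.sub hsqrt
  have hexp : HasDerivAt (fun t => exp (-r * t)) (exp (-r * τ) * -r) τ := by
    simpa using ((hasDerivAt_id τ).const_mul (-r)).exp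
  refine ((((hasDerivAt_Phi _).comp τ hd1).const_mul x).sub
    ((hexp.const_mul K).mul ((hasDerivAt_Phi _).comp τ hd2))).congr_deriv ?_
  simp only [Function.comp_apply]
  linear_combination (deriv (fun t => d1 K σ r t x) τ - σ * (1 / (2 * √τ))) *
      (mul_gaussianPDFReal_d1 (r := r) hK hσ hτ hx)

theorem tendsto_inv_mul_sqrt_nhdsGT_zero (hσ : 0 < σ) :
    Tendsto (fun τ => (σ * √τ)⁻¹) (𝓝[>] 0) atTop := by
  refine tendsto_inv_nhdsGT_zero.comp (tendsto_nhdsWithin_iff.2 ⟨?_, ?_⟩)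
  · exact ((continuous_const.mul continuous_sqrt).tendsto' 0 0 (by simp)).mono_left
      nhdsWithin_le_nhds
  · filter_upwards [self_mem_nhdsWithin] with τ hτ using mul_pos hσ (sqrt_pos.2 hτ)

theorem tendsto_const_add_mul_nhdsGT_zero (c a : ℝ) :
    Tendsto (fun τ => c + a * τ) (𝓝[>] 0) (𝓝 c) :=
  ((continuous_const.add (continuous_const.mul continuous_id)).tendsto' 0 c
    (by simp)).mono_left nhdsWithin_le_nhds

theorem tendsto_d1_atTop (hσ : 0 < σ) (hK : 0 < K) (hKx : K < x) :
    Tendsto (fun τ => d1 K σ r τ x) (𝓝[>] 0) atTop := by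
  simp only [d1, div_eq_mul_inv]
  exact (tendsto_const_add_mul_nhdsGT_zero _ _).pos_mul_atTop (log_pos ((one_lt_div hK).2 hKx))
    (tendsto_inv_mul_sqrt_nhdsGT_zero hσ)

theorem tendsto_d1_atBot (hσ : 0 < σ) (hx : 0 < x) (hxK : x < K) :
    Tendsto (fun τ => d1 K σ r τ x) (𝓝[>] 0) atBot := by
  simp only [d1, div_eq_mul_inv]
  exact (tendsto_const_add_mul_nhdsGT_zero _ _).neg_mul_atTop
    (log_neg (div_pos hx (hx.trans hxK)) ((div_lt_one (hx.trans hxK)).2 hxK))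
    (tendsto_inv_mul_sqrt_nhdsGT_zero hσ)

theorem tendsto_d1_self (hσ : σ ≠ 0) :
    Tendsto (fun τ => d1 K σ r τ K) (𝓝[>] 0) (𝓝 0) := by
  have hsqrt : Tendsto (fun τ => (r + σ ^ 2 / 2) / σ * √τ) (𝓝[>] 0) (𝓝 0) :=
    ((continuous_const.mul continuous_sqrt).tendsto' 0 0 (by simp)).mono_left
      nhdsWithin_le_nhds
  refine hsqrt.congr' ?_
  filter_upwards [self_mem_nhdsWithin] with τ hτ
  have hs : √τ ≠ 0 := (sqrt_pos.2 hτ).ne'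
  rw [d1, show log (K / K) = 0 by simp, zero_add]
  field_simp
  rw [sq_sqrt hτ.le]

theorem d2_eq_d1_sub_sq (hσ : σ ≠ 0) (hτ : 0 < τ) : d2 K σ r τ x = d1 K σ (r - σ ^ 2) τ x := by
  have hs : √τ ≠ 0 := (sqrt_pos.2 hτ).ne'
  simp only [d2, d1]
  field_simp
  rw [sq_sqrt hτ.le]
  ring

theorem tendsto_bsCall_of_tendsto_Phi_d1 (hσ : σ ≠ 0) {p : ℝ}
    (h : ∀ r, Tendsto (fun τ => Phi (d1 K σ r τ x)) (𝓝[>] 0) (𝓝 p)) :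
    Tendsto (fun τ => bsCall K σ r τ x) (𝓝[>] 0) (𝓝 ((x - K) * p)) := by
  have h2 : Tendsto (fun τ => Phi (d2 K σ r τ x)) (𝓝[>] 0) (𝓝 p) := by
    refine (h (r - σ ^ 2)).congr' ?_
    filter_upwards [self_mem_nhdsWithin] with τ hτ
    rw [d2_eq_d1_sub_sq hσ hτ]
  have hexp : Tendsto (fun τ => exp (-r * τ)) (𝓝[>] 0) (𝓝 1) :=
    ((continuous_const.mul continuous_id).rexp.tendsto' 0 1 (by simp)).mono_left
      nhdsWithin_le_nhds
  rw [show (x - K) * p = x * p - K * 1 * p by ring]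
  exact ((h r).const_mul x).sub ((hexp.const_mul K).mul h2)

end BlackScholes

theorem stmt9_general (K σ r : ℝ) (hK : 0 < K) (hσ : 0 < σ) :
    (∀ τ > (0:ℝ), ∀ x > (0:ℝ),
      deriv (fun t => bsCall K σ r t x) τ
        = (1/2) * σ^2 * x^2 * deriv (deriv (fun y => bsCall K σ r τ y)) x
          + r * x * deriv (fun y => bsCall K σ r τ y) x
          - r * bsCall K σ r τ x) ∧
    (∀ x > (0:ℝ),
      Tendsto (fun τ => bsCall K σ r τ x) (nhdsWithin 0 (Set.Ioi 0))
        (nhds (max (x - K) 0))) := by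
  refine ⟨fun τ hτ x hx => ?_, fun x hx => ?_⟩
  · rw [(hasDerivAt_bsCall_time hK hσ.ne' hτ hx).deriv, deriv_deriv_bsCall_spot hK hσ.ne' hτ hx,
      deriv_bsCall_spot hK hσ.ne' hτ hx, bsCall]
    have hs : √τ ≠ 0 := (sqrt_pos.2 hτ).ne'
    field_simp
    ring
  · rcases lt_trichotomy x K with hxK | rfl | hKx
    · simpa [max_eq_right (sub_nonpos.2 hxK.le)] using tendsto_bsCall_of_tendsto_Phi_d1 hσ.ne'
        fun r => tendsto_Phi_atBot.comp (tendsto_d1_atBot hσ hx hxK)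
    · simpa using tendsto_bsCall_of_tendsto_Phi_d1 (p := Phi 0) hσ.ne'
        fun r => (continuous_Phi.tendsto 0).comp (tendsto_d1_self hσ.ne')
    · simpa [max_eq_left (sub_nonneg.2 hKx.le)] using tendsto_bsCall_of_tendsto_Phi_d1 hσ.ne'
        fun r => tendsto_Phi_atTop.comp (tendsto_d1_atTop hσ hK hKx)

theorem stmt9 (K σ r : ℝ) (hK : 0 < K) (hσ : 0 < σ) (hr : 0 ≤ r) :
    (∀ τ > (0:ℝ), ∀ x > (0:ℝ),
      deriv (fun t => bsCall K σ r t x) τ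
        = (1/2) * σ^2 * x^2 * deriv (deriv (fun y => bsCall K σ r τ y)) x
          + r * x * deriv (fun y => bsCall K σ r τ y) x
          - r * bsCall K σ r τ x) ∧
    (∀ x > (0:ℝ),
      Tendsto (fun τ => bsCall K σ r τ x) (nhdsWithin 0 (Set.Ioi 0))
        (nhds (max (x - K) 0))) :=
  stmt9_general K σ r hK hσ
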